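/- arXiv:1609.04593 — 2 statements merged into one kernel-verified Lean document; each statement's English description precedes it below -/
import Mathlib

section
/- Let G be a connected finite graph containing a shortest path P of eccentricity k. Let x be the last vertex visited by a BFS from an arbitrary vertex r (i.e., x is a vertex maximizing d(r,x)), and let y be a vertex maximizing d(x,y). Then any shortest path from x to y has eccentricity at most 5k. In other words, double-BFS is a 5-approximation for the Minimum Eccentricity Shortest Path problem. -/
/-!
Measure positions on the shortest path `P` from `u` to `v` by the distance from `u`: two vertices
of `P` are exactly as far apart as their positions differ. Let `px` be a vertex of `P` within `k`
of `x`. Comparing `d(r, x)` with `d(r, u)` and `d(r, v)` through a vertex of `P` near `r` shows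
that `px` is within `3k` of an end of `P`, say of `u`. If `d(x, y) ≤ 5k`, every vertex is within
`5k` of `x`. Otherwise the vertex of `P` near `y` has position at least `pos(px) + d(x, y) - 2k`,
while every position is at most `pos(px) + d(x, y) + k`. Hence, walking along `Q`, the vertices
of `P` near `Q` come within `3k` of every position of `P`, and every vertex, being within `k` of
`P`, is within `k + 3k + k` of `Q`.
-/

open SimpleGraph

variable {V : Type*}

/-- Distance from a vertex `x` to (the support of) a walk `p`. -/
noncomputable def walkDist (G : SimpleGraph V) {u v : V} (x : V) (p : G.Walk u v) : ℕ :=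
  sInf {n | ∃ w ∈ p.support, G.dist x w = n}

/-- A walk is a shortest path when its length equals the distance between its ends. -/
noncomputable def IsShortestPath (G : SimpleGraph V) {u v : V} (p : G.Walk u v) : Prop :=
  p.length = G.dist u v

/-- Eccentricity of a walk: the largest distance from any vertex to the walk. -/
noncomputable def walkEcc [Fintype V] (G : SimpleGraph V) {u v : V} (p : G.Walk u v) : ℕ :=
  sSup {n | ∃ x : V, walkDist G x p = n}

/-- A diameter: a shortest path of maximum length among all distances. -/
noncomputable def IsDiameter [Fintype V] (G : SimpleGraph V) {u v : V} (p : G.Walk u v) : Prop :=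
  IsShortestPath G p ∧ ∀ a b : V, G.dist a b ≤ p.length

/-- `k(G)`: minimum eccentricity over all shortest paths. -/
noncomputable def minK [Fintype V] (G : SimpleGraph V) : ℕ :=
  sInf {n | ∃ (u v : V) (p : G.Walk u v), IsShortestPath G p ∧ walkEcc G p = n}

/-- `l(G)`: minimum eccentricity over all diameters. -/
noncomputable def minL [Fintype V] (G : SimpleGraph V) : ℕ :=
  sInf {n | ∃ (u v : V) (p : G.Walk u v), IsDiameter G p ∧ walkEcc G p = n}

/-- `s(G)`: maximum eccentricity over all diameters. -/
noncomputable def maxS [Fintype V] (G : SimpleGraph V) : ℕ :=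
  sSup {n | ∃ (u v : V) (p : G.Walk u v), IsDiameter G p ∧ walkEcc G p = n}

variable {G : SimpleGraph V} {u v w x y : V}

theorem SimpleGraph.Connected.dist_triangle4 (hG : G.Connected) (a b c d : V) :
    G.dist a d ≤ G.dist a b + G.dist b c + G.dist c d :=
  hG.dist_triangle.trans (Nat.add_le_add_right hG.dist_triangle _)

theorem SimpleGraph.Walk.dist_start_getVert_le (p : G.Walk u v) (i : ℕ) :
    G.dist u (p.getVert i) ≤ i :=
  (dist_le (p.take i)).trans (by simp)

theorem SimpleGraph.Walk.dist_getVert_end_le (p : G.Walk u v) (i : ℕ) :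
    G.dist (p.getVert i) v ≤ p.length - i := by
  simpa using dist_le (p.drop i)

theorem IsShortestPath.of_isSubwalk {u' v' : V} {p : G.Walk u v} {q : G.Walk u' v'}
    (hp : IsShortestPath G p) (hq : q.IsSubwalk p) : IsShortestPath G q :=
  length_eq_dist_of_subwalk hp hq

theorem IsShortestPath.reverse {p : G.Walk u v} (hp : IsShortestPath G p) :
    IsShortestPath G p.reverse := by
  rw [IsShortestPath, Walk.length_reverse, G.dist_comm]
  exact hp

theorem IsShortestPath.dist_add_dist {p : G.Walk u v} (hp : IsShortestPath G p)
    (hw : w ∈ p.support) : G.dist u w + G.dist w v = G.dist u v := by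
  classical
  rw [← hp.of_isSubwalk (p.isSubwalk_takeUntil hw), ← hp.of_isSubwalk (p.isSubwalk_dropUntil hw),
    ← Walk.length_append, p.take_spec hw]
  exact hp

theorem IsShortestPath.dist_start_add_dist_eq_or {p : G.Walk u v} (hp : IsShortestPath G p)
    (hw : w ∈ p.support) (hx : x ∈ p.support) :
    G.dist u w + G.dist w x = G.dist u x ∨ G.dist u x + G.dist w x = G.dist u w := by
  classical
  have hsplit : x ∈ (p.takeUntil w hw).support ∨ x ∈ (p.dropUntil w hw).support := by
    rw [← Walk.mem_support_append_iff, p.take_spec hw]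
    exact hx
  rcases hsplit with hx' | hx'
  · have := (hp.of_isSubwalk (p.isSubwalk_takeUntil hw)).dist_add_dist hx'
    have := G.dist_comm (u := w) (v := x)
    omega
  · have := (hp.of_isSubwalk (p.isSubwalk_dropUntil hw)).dist_add_dist hx'
    have := hp.dist_add_dist hw
    have := hp.dist_add_dist hx
    omega

theorem IsShortestPath.dist_le_of_dist_start_le (hG : G.Connected) {p : G.Walk u v}
    (hp : IsShortestPath G p) {a b : V} (ha : a ∈ p.support) (hb : b ∈ p.support) {m : ℕ}
    (hab : G.dist u a ≤ G.dist u b + m) (hba : G.dist u b ≤ G.dist u a + m) (z q : V) :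
    G.dist z q ≤ G.dist z a + m + G.dist q b := by
  have := hp.dist_start_add_dist_eq_or ha hb
  have := hG.dist_triangle4 z a b q
  have := G.dist_comm (u := b) (v := q)
  omega

theorem walkDist_le_iff {p : G.Walk u v} {k : ℕ} :
    walkDist G x p ≤ k ↔ ∃ w ∈ p.support, G.dist x w ≤ k := by
  constructor
  · intro h
    have hne : {n | ∃ w ∈ p.support, G.dist x w = n}.Nonempty :=
      ⟨_, u, p.start_mem_support, rfl⟩
    obtain ⟨w, hw, hxw⟩ := Nat.sInf_mem hne
    exact ⟨w, hw, hxw.trans_le h⟩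
  · rintro ⟨w, hw, hxw⟩
    exact (Nat.sInf_le (s := {n | ∃ w ∈ p.support, G.dist x w = n}) ⟨w, hw, rfl⟩).trans hxw

theorem walkEcc_le_iff [Fintype V] {p : G.Walk u v} {k : ℕ} :
    walkEcc G p ≤ k ↔ ∀ x, ∃ w ∈ p.support, G.dist x w ≤ k := by
  simp only [← walkDist_le_iff]
  exact ciSup_le_iff' (Set.finite_range _).bddAbove

theorem walkEcc_reverse [Fintype V] (p : G.Walk u v) : walkEcc G p.reverse = walkEcc G p := by
  simp [walkEcc, walkDist, Walk.support_reverse]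

theorem exists_mem_support_near_end_of_farthest [Fintype V] (hG : G.Connected)
    {P : G.Walk u v} (hP : IsShortestPath G P) {k : ℕ} (hk : walkEcc G P ≤ k) {r : V}
    (hx : ∀ w, G.dist r w ≤ G.dist r x) :
    ∃ px ∈ P.support, G.dist x px ≤ k ∧ (G.dist u px ≤ 3 * k ∨ G.dist px v ≤ 3 * k) := by
  obtain ⟨px, hpx, hxpx⟩ := walkEcc_le_iff.mp hk x
  obtain ⟨pr, hpr, hrpr⟩ := walkEcc_le_iff.mp hk r
  refine ⟨px, hpx, hxpx, ?_⟩
  have := hG.dist_triangle4 r pr px x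
  have := hG.dist_triangle (u := u) (v := r) (w := pr)
  have := hG.dist_triangle (u := pr) (v := r) (w := v)
  have := hx u
  have := hx v
  have := G.dist_comm (u := u) (v := r)
  have := G.dist_comm (u := pr) (v := r)
  have := G.dist_comm (u := px) (v := x)
  have := hP.dist_add_dist hpx
  have := hP.dist_add_dist hpr
  have := hP.dist_start_add_dist_eq_or hpr hpx
  omega

theorem walkEcc_le_five_mul_of_near_start [Fintype V] (hG : G.Connected) {P : G.Walk u v}
    (hP : IsShortestPath G P) {k : ℕ} (hk : walkEcc G P ≤ k) {px : V} (hpx : px ∈ P.support)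
    (hxpx : G.dist x px ≤ k) (hupx : G.dist u px ≤ 3 * k) (hy : ∀ w, G.dist x w ≤ G.dist x y)
    {Q : G.Walk x y} (hQ : IsShortestPath G Q) : walkEcc G Q ≤ 5 * k := by
  rw [walkEcc_le_iff]
  intro z
  by_cases hD : G.dist x y ≤ 5 * k
  · exact ⟨x, Q.start_mem_support, G.dist_comm.trans_le ((hy z).trans hD)⟩
  obtain ⟨pz, hpz, hzpz⟩ := walkEcc_le_iff.mp hk z
  obtain ⟨py, hpy, hypy⟩ := walkEcc_le_iff.mp hk y
  have close : ∀ q ∈ Q.support, ∀ b ∈ P.support, G.dist q b ≤ k →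
      G.dist u pz ≤ G.dist u b + 3 * k → G.dist u b ≤ G.dist u pz + 3 * k →
      ∃ q ∈ Q.support, G.dist z q ≤ 5 * k := fun q hq b hb hqb h₁ h₂ ↦
    ⟨q, hq, (hP.dist_le_of_dist_start_le hG hpz hb h₁ h₂ z q).trans (by omega)⟩
  have := hP.dist_add_dist hpz
  have := hP.dist_add_dist hpy
  have hv : G.dist u v ≤ G.dist u px + k + G.dist x y := by
    have := hP.dist_add_dist hpx
    have := hG.dist_triangle (u := px) (v := x) (w := v)
    have := hy v
    have := G.dist_comm (u := px) (v := x)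
    omega
  have hpy_far : G.dist u px + G.dist x y ≤ G.dist u py + 2 * k := by
    have := hG.dist_triangle4 x px py y
    have := G.dist_comm (u := py) (v := y)
    have := hP.dist_start_add_dist_eq_or hpx hpy
    omega
  rcases lt_or_ge (G.dist u pz + k) (G.dist u px) with hlow | hlow
  · exact close x Q.start_mem_support px hpx hxpx (by omega) (by omega)
  rcases le_or_gt (G.dist u pz + k) (G.dist u px + G.dist x y) with hmid | hhigh
  · obtain ⟨i, hi⟩ : ∃ i, G.dist u pz + k = G.dist u px + i := ⟨_, (Nat.add_sub_of_le hlow).symm⟩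
    obtain ⟨q, hq, hxq, hqy⟩ : ∃ q ∈ Q.support, G.dist x q ≤ i ∧ G.dist q y ≤ G.dist x y - i :=
      ⟨Q.getVert i, Q.getVert_mem_support i, Q.dist_start_getVert_le i,
        hQ ▸ Q.dist_getVert_end_le i⟩
    obtain ⟨pq, hpq, hqpq⟩ := walkEcc_le_iff.mp hk q
    have := hG.dist_triangle4 px x q pq
    have := hG.dist_triangle (u := u) (v := px) (w := pq)
    have := hG.dist_triangle4 pq q y py
    have := hG.dist_triangle (u := u) (v := pq) (w := py)
    have := G.dist_comm (u := px) (v := x)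
    have := G.dist_comm (u := pq) (v := q)
    have := G.dist_comm (u := py) (v := y)
    exact close q hq pq hpq hqpq (by omega) (by omega)
  · exact close y Q.end_mem_support py hpy hypy (by omega) (by omega)

theorem stmt2 [Fintype V] (G : SimpleGraph V) (hG : G.Connected)
    {u v : V} (P : G.Walk u v) (hP : IsShortestPath G P) (k : ℕ)
    (hecc : walkEcc G P = k)
    (r x y : V)
    (hx : ∀ w : V, G.dist r w ≤ G.dist r x)
    (hy : ∀ w : V, G.dist x w ≤ G.dist x y)
    (Q : G.Walk x y) (hQ : IsShortestPath G Q) :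
    walkEcc G Q ≤ 5 * k := by
  obtain ⟨px, hpx, hxpx, hupx | hpxv⟩ := exists_mem_support_near_end_of_farthest hG hP hecc.le hx
  · exact walkEcc_le_five_mul_of_near_start hG hP hecc.le hpx hxpx hupx hy hQ
  · exact walkEcc_le_five_mul_of_near_start hG hP.reverse ((walkEcc_reverse P).trans_le hecc.le)
      (by simpa [Walk.support_reverse] using hpx) hxpx (by rwa [G.dist_comm]) hy hQ
end

section
/- If a connected graph G has a shortest path of eccentricity k between vertices s and t, then every path Q containing s and satisfying d(s,t) ≤ max_{v ∈ Q} d(s,v) has eccentricity at most 3k. -/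
/-!
Let `p` be a vertex of `P` nearest to a given vertex `z`, so `d(z, p) ≤ k`. Since
`d(s, p) ≤ d(s, t) ≤ d(s, w)` for some `w ∈ Q`, and distances from `s` change by at most one
along an edge, the part of `Q` between `s` and `w` contains a vertex `q` with `d(s, q) = d(s, p)`.
If `p'` is a vertex of `P` nearest to `q`, then along the geodesic `P` we get
`d(p, p') = |d(s, q) - d(s, p')| ≤ d(q, p') ≤ k`, hence `d(z, q) ≤ d(z, p) + d(p, p') + d(p', q) ≤ 3k`.
-/

open SimpleGraph

variable {V : Type*}

namespace SimpleGraph.Walk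

variable {G : SimpleGraph V}

lemma exists_walk_support_subset [DecidableEq V] {a b u v : V} (p : G.Walk a b)
    (hu : u ∈ p.support) (hv : v ∈ p.support) :
    ∃ q : G.Walk u v, q.support ⊆ p.support := by
  rw [← p.take_spec hu, mem_support_append_iff] at hv
  rcases hv with hv | hv
  · refine ⟨((p.takeUntil u hu).dropUntil v hv).reverse, fun x hx => ?_⟩
    rw [support_reverse, List.mem_reverse] at hx
    exact support_takeUntil_subset_support _ _ (support_dropUntil_subset_support _ _ hx)
  · exact ⟨(p.dropUntil u hu).takeUntil v hv,
      fun x hx => support_dropUntil_subset_support _ _ (support_takeUntil_subset_support _ _ hx)⟩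

lemma exists_mem_support_dist_eq (s : V) {c e : V} (R : G.Walk c e) {m : ℕ}
    (hc : G.dist s c ≤ m) (he : m ≤ G.dist s e) : ∃ q ∈ R.support, G.dist s q = m := by
  induction R with
  | nil => exact ⟨_, start_mem_support _, le_antisymm hc he⟩
  | cons h R ih =>
    obtain hc | hc := hc.eq_or_lt
    · exact ⟨_, start_mem_support _, hc⟩
    · obtain ⟨q, hq, hqm⟩ := ih (by rcases h.diff_dist_adj (u := s) with h' | h' | h' <;> omega) he
      exact ⟨q, List.mem_cons_of_mem _ hq, hqm⟩

end SimpleGraph.Walk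

section WalkDist

variable {G : SimpleGraph V} {u v : V}

lemma walkDist_le_dist {p : G.Walk u v} (x : V) {w : V} (hw : w ∈ p.support) :
    walkDist G x p ≤ G.dist x w :=
  Nat.sInf_le ⟨w, hw, rfl⟩

lemma exists_mem_support_dist_eq_walkDist (p : G.Walk u v) (x : V) :
    ∃ w ∈ p.support, G.dist x w = walkDist G x p :=
  Nat.sInf_mem (s := {n | ∃ w ∈ p.support, G.dist x w = n}) ⟨_, u, p.start_mem_support, rfl⟩

lemma walkEcc_le [Fintype V] {p : G.Walk u v} {n : ℕ} (h : ∀ x, walkDist G x p ≤ n) :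
    walkEcc G p ≤ n :=
  csSup_le' <| by rintro _ ⟨x, rfl⟩; exact h x

end WalkDist

namespace IsShortestPath

variable {G : SimpleGraph V} {u v x y : V}

lemma of_append_left {p : G.Walk u x} {q : G.Walk x v} (h : IsShortestPath G (p.append q)) :
    IsShortestPath G p := by
  have hlen : p.length + q.length = G.dist u v := (Walk.length_append p q).symm.trans h
  have := dist_le p
  have := dist_le q
  have := p.reachable.dist_triangle_left v
  unfold IsShortestPath
  omega

lemma of_append_right {p : G.Walk u x} {q : G.Walk x v} (h : IsShortestPath G (p.append q)) :
    IsShortestPath G q := by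
  have hlen : p.length + q.length = G.dist u v := (Walk.length_append p q).symm.trans h
  have := dist_le p
  have := dist_le q
  have := q.reachable.dist_triangle_right u
  unfold IsShortestPath
  omega

lemma takeUntil [DecidableEq V] {p : G.Walk u v} (hp : IsShortestPath G p)
    (hx : x ∈ p.support) : IsShortestPath G (p.takeUntil x hx) := by
  rw [← p.take_spec hx] at hp
  exact hp.of_append_left

lemma dropUntil [DecidableEq V] {p : G.Walk u v} (hp : IsShortestPath G p)
    (hx : x ∈ p.support) : IsShortestPath G (p.dropUntil x hx) := by
  rw [← p.take_spec hx] at hp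
  exact hp.of_append_right

lemma dist_add_dist_s14 {p : G.Walk u v} (hp : IsShortestPath G p) (hx : x ∈ p.support) :
    G.dist u x + G.dist x v = G.dist u v := by
  classical
  have h := hp.takeUntil hx
  have h' := hp.dropUntil hx
  unfold IsShortestPath at hp h h'
  rw [← h, ← h', ← hp, ← Walk.length_append, p.take_spec hx]

lemma dist_eq_natAbs {p : G.Walk u v} (hp : IsShortestPath G p) (hx : x ∈ p.support)
    (hy : y ∈ p.support) : G.dist x y = ((G.dist u x : ℤ) - G.dist u y).natAbs := by
  classical
  have hux := hp.dist_add_dist_s14 hx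
  have huy := hp.dist_add_dist_s14 hy
  rw [← p.take_spec hx, Walk.mem_support_append_iff] at hy
  rcases hy with hy | hy
  · have := (hp.takeUntil hx).dist_add_dist_s14 hy
    rw [G.dist_comm (u := x)]
    omega
  · have := (hp.dropUntil hx).dist_add_dist_s14 hy
    omega

end IsShortestPath

theorem stmt14 [Fintype V] (G : SimpleGraph V) (hG : G.Connected)
    {s t : V} (P : G.Walk s t) (hP : IsShortestPath G P) (k : ℕ)
    (hecc : ∀ z : V, walkDist G z P ≤ k) :
    ∀ (a b : V) (Q : G.Walk a b), s ∈ Q.support →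
      (∃ w ∈ Q.support, G.dist s t ≤ G.dist s w) →
      walkEcc G Q ≤ 3 * k := by
  classical
  rintro a b Q hsQ ⟨w, hwQ, hsw⟩
  obtain ⟨W, hWQ⟩ := Q.exists_walk_support_subset hsQ hwQ
  refine walkEcc_le fun z => ?_
  obtain ⟨p, hpP, hzp⟩ := exists_mem_support_dist_eq_walkDist P z
  obtain ⟨q, hqW, hsq⟩ := W.exists_mem_support_dist_eq s (m := G.dist s p) (by simp)
    (by have := hP.dist_add_dist_s14 hpP; omega)
  obtain ⟨p', hp'P, hqp'⟩ := exists_mem_support_dist_eq_walkDist P q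
  have hzp_le : G.dist z p ≤ k := hzp ▸ hecc z
  have hqp'_le : G.dist q p' ≤ k := hqp' ▸ hecc q
  have hpp'_le : G.dist p p' ≤ k := by
    have h₁ : G.dist s p' ≤ G.dist s q + G.dist q p' := hG.dist_triangle
    have h₂ : G.dist s q ≤ G.dist s p' + G.dist q p' := by
      rw [G.dist_comm (u := q)]; exact hG.dist_triangle
    rw [hP.dist_eq_natAbs hpP hp'P, ← hsq]
    omega
  calc walkDist G z Q ≤ G.dist z q := walkDist_le_dist z (hWQ hqW)
    _ ≤ G.dist z p + (G.dist p p' + G.dist q p') := by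
      rw [G.dist_comm (u := q)]
      exact hG.dist_triangle.trans (by gcongr; exact hG.dist_triangle)
    _ ≤ k + (k + k) := by gcongr
    _ = 3 * k := by ring
end
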